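/- Let A be a partial H-bimodule algebra satisfying the symmetry condition and A⊛H=(A⊗H)(1_A⊗1_H) the partial twisted smash product. Then the map ρ := (id_A⊗Δ) restricted to A⊛H takes values in (A⊛H)⊗H, namely ρ((a⊗h)(1_A⊗1_H)) = (a(h₁⇀1_A↼S(h₂))⊗h₃)⊗h₄, and it makes A⊛H a right H-comodule algebra: ρ is multiplicative, (ρ⊗id_H)∘ρ = (id⊗Δ)∘ρ, and (id⊗ε)∘ρ = id on A⊛H. -/
import Mathlib


open TensorProduct

noncomputable section

/-- A partial `H`-bimodule algebra over a Hopf algebra `H`: a unital algebra `A`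
with a partial left action `⇀ : H ⊗ A → A` and a partial right action `↼ : A ⊗ H → A`
(encoded as curried `k`-bilinear maps), satisfying the partial (bi)module algebra axioms.
Sweedler sums `Σ h₁ ⊗ h₂ = Δ(h)` are encoded by quantifying over arbitrary finite
representations of the comultiplication. -/
structure PartialBimoduleAlgebra (k H A : Type) [Field k] [Ring H] [HopfAlgebra k H]
    [Ring A] [Algebra k A] where
  /-- the partial left action `h ⇀ a` -/
  actL : H →ₗ[k] A →ₗ[k] A
  /-- the partial right action `a ↼ h` -/
  actR : A →ₗ[k] H →ₗ[k] A
  /-- `1_H ⇀ a = a` -/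
  actL_one : ∀ a : A, actL 1 a = a
  /-- `h ⇀ (ab) = (h₁ ⇀ a)(h₂ ⇀ b)` -/
  actL_mul : ∀ (h : H) (a b : A) (ι : Type) (s : Finset ι) (h₁ h₂ : ι → H),
    Coalgebra.comul (R := k) h = ∑ i ∈ s, h₁ i ⊗ₜ[k] h₂ i →
    actL h (a * b) = ∑ i ∈ s, actL (h₁ i) a * actL (h₂ i) b
  /-- `h ⇀ (g ⇀ a) = (h₁ ⇀ 1_A)((h₂ g) ⇀ a)` -/
  actL_actL : ∀ (h g : H) (a : A) (ι : Type) (s : Finset ι) (h₁ h₂ : ι → H),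
    Coalgebra.comul (R := k) h = ∑ i ∈ s, h₁ i ⊗ₜ[k] h₂ i →
    actL h (actL g a) = ∑ i ∈ s, actL (h₁ i) 1 * actL (h₂ i * g) a
  /-- `a ↼ 1_H = a` -/
  actR_one : ∀ a : A, actR a 1 = a
  /-- `(ab) ↼ h = (a ↼ h₁)(b ↼ h₂)` -/
  actR_mul : ∀ (h : H) (a b : A) (ι : Type) (s : Finset ι) (h₁ h₂ : ι → H),
    Coalgebra.comul (R := k) h = ∑ i ∈ s, h₁ i ⊗ₜ[k] h₂ i →
    actR (a * b) h = ∑ i ∈ s, actR a (h₁ i) * actR b (h₂ i)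
  /-- `(a ↼ g) ↼ h = (1_A ↼ h₁)(a ↼ (g h₂))` -/
  actR_actR : ∀ (g h : H) (a : A) (ι : Type) (s : Finset ι) (h₁ h₂ : ι → H),
    Coalgebra.comul (R := k) h = ∑ i ∈ s, h₁ i ⊗ₜ[k] h₂ i →
    actR (actR a g) h = ∑ i ∈ s, actR 1 (h₁ i) * actR a (g * h₂ i)
  /-- `(h ⇀ a) ↼ g = h ⇀ (a ↼ g)` -/
  compat : ∀ (h g : H) (a : A), actR (actL h a) g = actL h (actR a g)

/-- The two-fold iterated comultiplication `h ↦ h₁ ⊗ (h₂ ⊗ h₃)`. -/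
def comul3 (k H : Type) [Field k] [Ring H] [HopfAlgebra k H] :
    H →ₗ[k] H ⊗[k] (H ⊗[k] H) :=
  LinearMap.lTensor H (Coalgebra.comul (R := k)) ∘ₗ Coalgebra.comul (R := k)

/-- `μ` is the partial twisted smash product multiplication on `A ⊗ H`:
on pure tensors, `(a ⊗ h)(b ⊗ g) = a (h₁ ⇀ b ↼ S(h₃)) ⊗ h₂ g`. -/
def IsPartialSmashMul (k H A : Type) [Field k] [Ring H] [HopfAlgebra k H]
    [Ring A] [Algebra k A] (P : PartialBimoduleAlgebra k H A)
    (μ : A ⊗[k] H →ₗ[k] A ⊗[k] H →ₗ[k] A ⊗[k] H) : Prop :=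
  ∀ (a b : A) (h g : H) (ι : Type) (s : Finset ι) (h₁ h₂ h₃ : ι → H),
    comul3 k H h = ∑ i ∈ s, h₁ i ⊗ₜ[k] (h₂ i ⊗ₜ[k] h₃ i) →
    μ (a ⊗ₜ[k] h) (b ⊗ₜ[k] g)
      = ∑ i ∈ s,
          (a * P.actR (P.actL (h₁ i) b) (HopfAlgebra.antipode (R := k) (h₃ i)))
            ⊗ₜ[k] (h₂ i * g)

/-- The symmetry condition `(a ↼ S(h₁)) ⊗ h₂ = (a ↼ S(h₂)) ⊗ h₁` in `A ⊗ H`. -/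
def SymCond (k H A : Type) [Field k] [Ring H] [HopfAlgebra k H]
    [Ring A] [Algebra k A] (P : PartialBimoduleAlgebra k H A) : Prop :=
  ∀ (a : A) (h : H) (ι : Type) (s : Finset ι) (h₁ h₂ : ι → H),
    Coalgebra.comul (R := k) h = ∑ i ∈ s, h₁ i ⊗ₜ[k] h₂ i →
    ∑ i ∈ s, P.actR a (HopfAlgebra.antipode (R := k) (h₁ i)) ⊗ₜ[k] h₂ i
      = ∑ i ∈ s, P.actR a (HopfAlgebra.antipode (R := k) (h₂ i)) ⊗ₜ[k] h₁ i

/-- The subspace `A ⊛ H := (A ⊗ H)(1_A ⊗ 1_H)` of `A ⊗ H`. -/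
def unitalPart (k H A : Type) [Field k] [Ring H] [HopfAlgebra k H]
    [Ring A] [Algebra k A]
    (μ : A ⊗[k] H →ₗ[k] A ⊗[k] H →ₗ[k] A ⊗[k] H) : Submodule k (A ⊗[k] H) :=
  LinearMap.range (μ.flip ((1 : A) ⊗ₜ[k] (1 : H)))

/-- The three-fold iterated comultiplication `h ↦ h₁ ⊗ (h₂ ⊗ (h₃ ⊗ h₄))`. -/
def comul4 (k H : Type) [Field k] [Ring H] [HopfAlgebra k H] :
    H →ₗ[k] H ⊗[k] (H ⊗[k] (H ⊗[k] H)) :=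
  LinearMap.lTensor H (comul3 k H) ∘ₗ Coalgebra.comul (R := k)

/-- The coaction `ρ = id_A ⊗ Δ : A ⊗ H → (A ⊗ H) ⊗ H` (after reassociating). -/
def smashCoact (k H A : Type) [Field k] [Ring H] [HopfAlgebra k H]
    [Ring A] [Algebra k A] : A ⊗[k] H →ₗ[k] (A ⊗[k] H) ⊗[k] H :=
  (TensorProduct.assoc k A H H).symm.toLinearMap
    ∘ₗ LinearMap.lTensor A (Coalgebra.comul (R := k))

section AuxSmash

variable (k : Type) {H A : Type} [Field k] [Ring H] [HopfAlgebra k H] [Ring A] [Algebra k A]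

/-- canonical pure-tensor representation of the comultiplication -/
def crep (h : H) : Finset (H × H) :=
  (TensorProduct.exists_finset (Coalgebra.comul (R := k) h)).choose

lemma crep_spec (h : H) :
    Coalgebra.comul (R := k) h = ∑ p ∈ crep k h, p.1 ⊗ₜ[k] p.2 :=
  (TensorProduct.exists_finset (Coalgebra.comul (R := k) h)).choose_spec

variable {k}

/-- `x ⊗ t ↦ (x ⇀ b) ↼ S t`, as a bilinear map. -/
def tauB (P : PartialBimoduleAlgebra k H A) (b : A) : H →ₗ[k] H →ₗ[k] A where
  toFun x := (P.actR (P.actL x b)) ∘ₗ (HopfAlgebra.antipode (R := k) : H →ₗ[k] H)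
  map_add' x y := by ext t; simp
  map_smul' c x := by ext t; simp

@[simp] lemma tauB_apply (P : PartialBimoduleAlgebra k H A) (b : A) (x t : H) :
    tauB P b x t = P.actR (P.actL x b) (HopfAlgebra.antipode (R := k) t) := rfl

def XiCore (P : PartialBimoduleAlgebra k H A) (a b : A) (w z : H) :
    (H ⊗[k] H) ⊗[k] (H ⊗[k] H) →ₗ[k] (A ⊗[k] H) ⊗[k] H :=
  (TensorProduct.assoc k A H H).symm.toLinearMap
    ∘ₗ TensorProduct.map (LinearMap.mulLeft k a ∘ₗ TensorProduct.lift (tauB P b))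
        (TensorProduct.map (LinearMap.mulRight k w) (LinearMap.mulRight k z))

/-- contract legs (1,2) -/
def Xi0 (P : PartialBimoduleAlgebra k H A) (a b : A) (w z : H) :
    H ⊗[k] (H ⊗[k] (H ⊗[k] H)) →ₗ[k] (A ⊗[k] H) ⊗[k] H :=
  XiCore P a b w z ∘ₗ (TensorProduct.assoc k H H (H ⊗[k] H)).symm.toLinearMap

/-- contract legs (1,3) -/
def Xi3 (P : PartialBimoduleAlgebra k H A) (a b : A) (w z : H) :
    H ⊗[k] (H ⊗[k] (H ⊗[k] H)) →ₗ[k] (A ⊗[k] H) ⊗[k] H :=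
  XiCore P a b w z ∘ₗ (TensorProduct.assoc k H H (H ⊗[k] H)).symm.toLinearMap
    ∘ₗ LinearMap.lTensor H ((TensorProduct.comm k (H ⊗[k] H) H).toLinearMap
        ∘ₗ (TensorProduct.assoc k H H H).symm.toLinearMap
        ∘ₗ LinearMap.lTensor H (TensorProduct.comm k H H).toLinearMap)

/-- contract legs (1,4) -/
def Xi4 (P : PartialBimoduleAlgebra k H A) (a b : A) (w z : H) :
    H ⊗[k] (H ⊗[k] (H ⊗[k] H)) →ₗ[k] (A ⊗[k] H) ⊗[k] H :=
  XiCore P a b w z ∘ₗ (TensorProduct.assoc k H H (H ⊗[k] H)).symm.toLinearMap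
    ∘ₗ LinearMap.lTensor H ((TensorProduct.comm k (H ⊗[k] H) H).toLinearMap
        ∘ₗ (TensorProduct.assoc k H H H).symm.toLinearMap)

@[simp] lemma Xi0_tmul (P : PartialBimoduleAlgebra k H A) (a b : A) (w z : H) (x y u v : H) :
    Xi0 P a b w z (x ⊗ₜ[k] (y ⊗ₜ[k] (u ⊗ₜ[k] v)))
      = ((a * P.actR (P.actL x b) (HopfAlgebra.antipode (R := k) y)) ⊗ₜ[k] (u * w))
          ⊗ₜ[k] (v * z) := by
  simp [Xi0, XiCore]

@[simp] lemma Xi3_tmul (P : PartialBimoduleAlgebra k H A) (a b : A) (w z : H) (x y u v : H) :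
    Xi3 P a b w z (x ⊗ₜ[k] (y ⊗ₜ[k] (u ⊗ₜ[k] v)))
      = ((a * P.actR (P.actL x b) (HopfAlgebra.antipode (R := k) u)) ⊗ₜ[k] (y * w))
          ⊗ₜ[k] (v * z) := by
  simp [Xi3, XiCore]

@[simp] lemma Xi4_tmul (P : PartialBimoduleAlgebra k H A) (a b : A) (w z : H) (x y u v : H) :
    Xi4 P a b w z (x ⊗ₜ[k] (y ⊗ₜ[k] (u ⊗ₜ[k] v)))
      = ((a * P.actR (P.actL x b) (HopfAlgebra.antipode (R := k) v)) ⊗ₜ[k] (y * w))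
          ⊗ₜ[k] (u * z) := by
  simp [Xi4, XiCore]

end AuxSmash
section AuxSmash2

variable (k : Type) {H A : Type} [Field k] [Ring H] [HopfAlgebra k H] [Ring A] [Algebra k A]

lemma comul3_apply (h : H) :
    comul3 k H h = LinearMap.lTensor H (Coalgebra.comul (R := k)) (Coalgebra.comul (R := k) h) :=
  rfl

lemma comul4_apply (h : H) :
    comul4 k H h = LinearMap.lTensor H (comul3 k H) (Coalgebra.comul (R := k) h) :=
  rfl

/-- `comul3` as a sum with both splittings on the left leg: `Δ³h = Σ p₁ ⊗ (p₂ ⊗ v)`. -/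
lemma comul3_repL (h : H) :
    comul3 k H h = ∑ j ∈ crep k h, ∑ p ∈ crep k j.1, p.1 ⊗ₜ[k] (p.2 ⊗ₜ[k] j.2) := by
  rw [comul3_apply, ← Coalgebra.coassoc_apply, crep_spec k h, map_sum, map_sum]
  refine Finset.sum_congr rfl fun j _ => ?_
  rw [LinearMap.rTensor_tmul, crep_spec k j.1, sum_tmul, map_sum]
  exact Finset.sum_congr rfl fun p _ => by rw [assoc_tmul]

/-- `comul3` as a sum with the splitting on the right leg: `Δ³h = Σ u ⊗ (q₁ ⊗ q₂)`. -/
lemma comul3_repR (h : H) :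
    comul3 k H h = ∑ j ∈ crep k h, ∑ q ∈ crep k j.2, j.1 ⊗ₜ[k] (q.1 ⊗ₜ[k] q.2) := by
  rw [comul3_apply, crep_spec k h, map_sum]
  refine Finset.sum_congr rfl fun j _ => ?_
  rw [LinearMap.lTensor_tmul, crep_spec k j.2, tmul_sum]

/-- the reassociating expansion map used to split the middle leg of `comul3` -/
def Jmap (k : Type) (H : Type) [Field k] [Ring H] [HopfAlgebra k H] :
    H ⊗[k] (H ⊗[k] H) →ₗ[k] H ⊗[k] (H ⊗[k] (H ⊗[k] H)) :=
  LinearMap.lTensor H ((TensorProduct.assoc k H H H).toLinearMap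
    ∘ₗ LinearMap.rTensor H (Coalgebra.comul (R := k)))

lemma comul4_eq_Jmap (h : H) : comul4 k H h = Jmap k H (comul3 k H h) := by
  rw [comul4_apply, comul3_apply, crep_spec k h]
  simp only [map_sum]
  refine Finset.sum_congr rfl fun j _ => ?_
  rw [LinearMap.lTensor_tmul, LinearMap.lTensor_tmul, Jmap, LinearMap.lTensor_tmul]
  congr 1
  simp only [LinearMap.comp_apply, LinearEquiv.coe_toLinearMap]
  rw [Coalgebra.coassoc_apply, ← comul3_apply]

lemma comul4_eq_lTensor (h : H) :
    comul4 k H h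
      = LinearMap.lTensor H (LinearMap.lTensor H (Coalgebra.comul (R := k)))
          (comul3 k H h) := by
  rw [comul4_apply, comul3_apply, crep_spec k h]
  simp only [map_sum]
  refine Finset.sum_congr rfl fun j _ => ?_
  rw [LinearMap.lTensor_tmul, LinearMap.lTensor_tmul, LinearMap.lTensor_tmul, comul3_apply]

/-- `comul4` in the fully-left-split form `Σ p₁ ⊗ (q₁ ⊗ (q₂ ⊗ v))`. -/
lemma comul4_rep (h : H) :
    comul4 k H h = ∑ j ∈ crep k h, ∑ p ∈ crep k j.1, ∑ q ∈ crep k p.2,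
      p.1 ⊗ₜ[k] (q.1 ⊗ₜ[k] (q.2 ⊗ₜ[k] j.2)) := by
  rw [comul4_eq_Jmap, comul3_repL, map_sum]
  refine Finset.sum_congr rfl fun j _ => ?_
  rw [map_sum]
  refine Finset.sum_congr rfl fun p _ => ?_
  rw [Jmap, LinearMap.lTensor_tmul, LinearMap.comp_apply, LinearMap.rTensor_tmul,
    crep_spec k p.2, sum_tmul, map_sum, tmul_sum]
  exact Finset.sum_congr rfl fun q _ => by simp

@[simp] lemma smashCoact_tmul (b : A) (x : H) :
    smashCoact k H A (b ⊗ₜ[k] x) = ∑ q ∈ crep k x, (b ⊗ₜ[k] q.1) ⊗ₜ[k] q.2 := by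
  rw [smashCoact, LinearMap.comp_apply, LinearMap.lTensor_tmul, crep_spec k x, tmul_sum,
    map_sum]
  exact Finset.sum_congr rfl fun q _ => by
    rw [LinearEquiv.coe_toLinearMap, assoc_symm_tmul]

end AuxSmash2
section AuxSmash3
set_option synthInstance.maxHeartbeats 400000

variable {k H A : Type} [Field k] [Ring H] [HopfAlgebra k H] [Ring A] [Algebra k A]

/-- symmetry moves the antipode between legs 3 and 4 -/
lemma swap34 (P : PartialBimoduleAlgebra k H A) (hsym : SymCond k H A P)
    (a b : A) (w z : H) (u : H ⊗[k] (H ⊗[k] H)) :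
    Xi4 P a b w z (LinearMap.lTensor H (LinearMap.lTensor H (Coalgebra.comul (R := k))) u)
      = Xi3 P a b w z
          (LinearMap.lTensor H (LinearMap.lTensor H (Coalgebra.comul (R := k))) u) := by
  induction u using TensorProduct.induction_on with
  | zero => simp
  | add x y hx hy => rw [map_add, map_add, map_add, hx, hy]
  | tmul x yz =>
    induction yz using TensorProduct.induction_on with
    | zero => rw [tmul_zero]; simp
    | add s t hs ht =>
      rw [tmul_add, map_add, map_add, map_add, hs, ht]
    | tmul y z0 =>
      rw [LinearMap.lTensor_tmul, LinearMap.lTensor_tmul, crep_spec k z0]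
      simp only [tmul_sum, map_sum, Xi4_tmul, Xi3_tmul]
      have hs := hsym (P.actL x b) z0 (H × H) (crep k z0) Prod.fst Prod.snd (crep_spec k z0)
      have h2 := congrArg
        (LinearMap.rTensor H
            (((TensorProduct.mk k A H).flip (y * w)) ∘ₗ LinearMap.mulLeft k a)
          ∘ₗ LinearMap.lTensor A (LinearMap.mulRight k z)) hs
      simp only [map_sum, LinearMap.comp_apply, LinearMap.lTensor_tmul,
        LinearMap.rTensor_tmul, LinearMap.mulRight_apply, LinearMap.mulLeft_apply,
        TensorProduct.mk_apply, LinearMap.flip_apply] at h2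
      exact h2.symm

/-- symmetry moves the antipode between legs 2 and 3 -/
lemma swap23 (P : PartialBimoduleAlgebra k H A) (hsym : SymCond k H A P)
    (a b : A) (w z : H) (u : H ⊗[k] (H ⊗[k] H)) :
    Xi3 P a b w z (Jmap k H u) = Xi0 P a b w z (Jmap k H u) := by
  induction u using TensorProduct.induction_on with
  | zero => simp
  | add x y hx hy => rw [map_add, map_add, map_add, hx, hy]
  | tmul x yz =>
    induction yz using TensorProduct.induction_on with
    | zero => rw [tmul_zero]; simp
    | add s t hs ht =>
      rw [tmul_add, map_add, map_add, map_add, hs, ht]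
    | tmul y z0 =>
      rw [Jmap, LinearMap.lTensor_tmul, LinearMap.comp_apply, LinearMap.rTensor_tmul,
        crep_spec k y, sum_tmul, map_sum, tmul_sum]
      simp only [LinearEquiv.coe_toLinearMap, assoc_tmul]
      simp only [map_sum, Xi4_tmul, Xi3_tmul, Xi0_tmul]
      have hs := hsym (P.actL x b) y (H × H) (crep k y) Prod.fst Prod.snd (crep_spec k y)
      have h2 := congrArg
        (((TensorProduct.mk k (A ⊗[k] H) H).flip (z0 * z))
          ∘ₗ TensorProduct.map (LinearMap.mulLeft k a) (LinearMap.mulRight k w)) hs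
      simp only [map_sum, LinearMap.comp_apply, TensorProduct.map_tmul,
        LinearMap.mulRight_apply, LinearMap.mulLeft_apply,
        TensorProduct.mk_apply, LinearMap.flip_apply] at h2
      exact h2.symm

end AuxSmash3
section AuxSmash4
set_option synthInstance.maxHeartbeats 400000
set_option maxHeartbeats 800000

variable {k H A : Type} [Field k] [Ring H] [HopfAlgebra k H] [Ring A] [Algebra k A]

lemma smashCoact_tmul_mul (c : A) (x g : H) :
    smashCoact k H A (c ⊗ₜ[k] (x * g))
      = ∑ q ∈ crep k x, ∑ l ∈ crep k g,
          (c ⊗ₜ[k] (q.1 * l.1)) ⊗ₜ[k] (q.2 * l.2) := by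
  rw [smashCoact, LinearMap.comp_apply, LinearMap.lTensor_tmul, Bialgebra.comul_mul,
    crep_spec k x, crep_spec k g, Finset.sum_mul_sum]
  simp only [Algebra.TensorProduct.tmul_mul_tmul, tmul_sum, map_sum,
    LinearEquiv.coe_toLinearMap, assoc_symm_tmul]

lemma key1 (P : PartialBimoduleAlgebra k H A)
    (μ : A ⊗[k] H →ₗ[k] A ⊗[k] H →ₗ[k] A ⊗[k] H) (hμ : IsPartialSmashMul k H A P μ)
    (a : A) (h : H) :
    smashCoact k H A (μ (a ⊗ₜ[k] h) ((1 : A) ⊗ₜ[k] (1 : H)))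
      = Xi4 P a 1 1 1 (comul4 k H h) := by
  have hrep : comul3 k H h
      = ∑ i ∈ (crep k h).sigma (fun j => crep k j.1),
          i.2.1 ⊗ₜ[k] (i.2.2 ⊗ₜ[k] i.1.2) := by
    rw [comul3_repL, Finset.sum_sigma]
  rw [hμ a 1 h 1 ((_ : H × H) × (H × H)) _ (fun i => i.2.1) (fun i => i.2.2) (fun i => i.1.2) hrep, map_sum,
    comul4_rep, Finset.sum_sigma]
  simp only [map_sum, Xi4_tmul, smashCoact_tmul, tauB_apply, mul_one]

lemma key2 (P : PartialBimoduleAlgebra k H A)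
    (μ : A ⊗[k] H →ₗ[k] A ⊗[k] H →ₗ[k] A ⊗[k] H) (hμ : IsPartialSmashMul k H A P μ)
    (a : A) (h : H) :
    LinearMap.rTensor H (μ.flip ((1 : A) ⊗ₜ[k] (1 : H))) (smashCoact k H A (a ⊗ₜ[k] h))
      = Xi3 P a 1 1 1 (comul4 k H h) := by
  rw [smashCoact_tmul, map_sum, comul4_rep]
  simp only [map_sum]
  refine Finset.sum_congr rfl fun j _ => ?_
  rw [LinearMap.rTensor_tmul, LinearMap.flip_apply]
  have hrep : comul3 k H j.1
      = ∑ i ∈ (crep k j.1).sigma (fun p => crep k p.2),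
          i.1.1 ⊗ₜ[k] (i.2.1 ⊗ₜ[k] i.2.2) := by
    rw [comul3_repR, Finset.sum_sigma]
  rw [hμ a 1 j.1 1 ((_ : H × H) × (H × H)) _ (fun i => i.1.1) (fun i => i.2.1) (fun i => i.2.2) hrep,
    sum_tmul, Finset.sum_sigma]
  simp only [sum_tmul, Xi3_tmul, tauB_apply, mul_one]

lemma key4 (a : A) (h : H) :
    (TensorProduct.assoc k (A ⊗[k] H) H H)
        (LinearMap.rTensor H (smashCoact k H A) (smashCoact k H A (a ⊗ₜ[k] h)))
      = LinearMap.lTensor (A ⊗[k] H) (Coalgebra.comul (R := k))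
          (smashCoact k H A (a ⊗ₜ[k] h)) := by
  trans (LinearMap.rTensor (H ⊗[k] H) ((TensorProduct.mk k A H) a)) (comul3 k H h)
  · rw [smashCoact_tmul, map_sum, map_sum, comul3_repL]
    simp only [LinearMap.rTensor_tmul, smashCoact_tmul, sum_tmul, map_sum, assoc_tmul,
      TensorProduct.mk_apply]
  · rw [smashCoact_tmul, map_sum, comul3_repR]
    simp only [map_sum, LinearMap.rTensor_tmul, LinearMap.lTensor_tmul,
      TensorProduct.mk_apply]
    refine Finset.sum_congr rfl fun j _ => ?_
    rw [crep_spec k j.2, tmul_sum]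

lemma key5 (a : A) (h : H) :
    (TensorProduct.rid k (A ⊗[k] H))
        (LinearMap.lTensor (A ⊗[k] H) (Coalgebra.counit (R := k))
          (smashCoact k H A (a ⊗ₜ[k] h)))
      = a ⊗ₜ[k] h := by
  rw [smashCoact_tmul, map_sum, map_sum]
  simp only [LinearMap.lTensor_tmul, rid_tmul]
  have h2 := congrArg (TensorProduct.rid k H) (Coalgebra.lTensor_counit_comul (R := k) h)
  rw [crep_spec k h] at h2
  simp only [map_sum, LinearMap.lTensor_tmul, rid_tmul, one_smul] at h2
  calc ∑ j ∈ crep k h, Coalgebra.counit (R := k) j.2 • (a ⊗ₜ[k] j.1)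
      = a ⊗ₜ[k] ∑ j ∈ crep k h, Coalgebra.counit (R := k) j.2 • j.1 := by
        rw [tmul_sum]
        exact Finset.sum_congr rfl fun j _ => (tmul_smul _ _ _).symm
    _ = a ⊗ₜ[k] h := by rw [h2]

end AuxSmash4
section AuxSmash5
set_option synthInstance.maxHeartbeats 400000
set_option maxHeartbeats 800000

variable {k H A : Type} [Field k] [Ring H] [HopfAlgebra k H] [Ring A] [Algebra k A]

lemma key3 (P : PartialBimoduleAlgebra k H A) (hsym : SymCond k H A P)
    (μ : A ⊗[k] H →ₗ[k] A ⊗[k] H →ₗ[k] A ⊗[k] H) (hμ : IsPartialSmashMul k H A P μ)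
    (μT : (A ⊗[k] H) ⊗[k] H →ₗ[k] (A ⊗[k] H) ⊗[k] H →ₗ[k] (A ⊗[k] H) ⊗[k] H)
    (hμT : ∀ (x y : A ⊗[k] H) (h g : H),
      μT (x ⊗ₜ[k] h) (y ⊗ₜ[k] g) = μ x y ⊗ₜ[k] (h * g))
    (a b : A) (h g : H) :
    smashCoact k H A (μ (a ⊗ₜ[k] h) (b ⊗ₜ[k] g))
      = μT (smashCoact k H A (a ⊗ₜ[k] h)) (smashCoact k H A (b ⊗ₜ[k] g)) := by
  have main : ∀ l : H × H,
      Xi4 P a b l.1 l.2 (comul4 k H h) = Xi3 P a b l.1 l.2 (comul4 k H h) := by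
    intro l
    rw [comul4_eq_lTensor]
    exact swap34 P hsym a b l.1 l.2 _
  have eval4 : ∀ l : H × H, Xi4 P a b l.1 l.2 (comul4 k H h)
      = ∑ j ∈ crep k h, ∑ p ∈ crep k j.1, ∑ q ∈ crep k p.2,
          ((a * P.actR (P.actL p.1 b) (HopfAlgebra.antipode (R := k) j.2))
            ⊗ₜ[k] (q.1 * l.1)) ⊗ₜ[k] (q.2 * l.2) := by
    intro l
    rw [comul4_rep]
    simp only [map_sum, Xi4_tmul, tauB_apply]
  have eval3 : ∀ l : H × H, Xi3 P a b l.1 l.2 (comul4 k H h)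
      = ∑ j ∈ crep k h, ∑ p ∈ crep k j.1, ∑ q ∈ crep k p.2,
          ((a * P.actR (P.actL p.1 b) (HopfAlgebra.antipode (R := k) q.2))
            ⊗ₜ[k] (q.1 * l.1)) ⊗ₜ[k] (j.2 * l.2) := by
    intro l
    rw [comul4_rep]
    simp only [map_sum, Xi3_tmul, tauB_apply]
  have hrepL : comul3 k H h
      = ∑ i ∈ (crep k h).sigma (fun j => crep k j.1),
          i.2.1 ⊗ₜ[k] (i.2.2 ⊗ₜ[k] i.1.2) := by
    rw [comul3_repL, Finset.sum_sigma]
  have lhs : smashCoact k H A (μ (a ⊗ₜ[k] h) (b ⊗ₜ[k] g))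
      = ∑ l ∈ crep k g, Xi4 P a b l.1 l.2 (comul4 k H h) := by
    calc smashCoact k H A (μ (a ⊗ₜ[k] h) (b ⊗ₜ[k] g))
        = ∑ j ∈ crep k h, ∑ p ∈ crep k j.1, ∑ q ∈ crep k p.2, ∑ l ∈ crep k g,
            ((a * P.actR (P.actL p.1 b) (HopfAlgebra.antipode (R := k) j.2))
              ⊗ₜ[k] (q.1 * l.1)) ⊗ₜ[k] (q.2 * l.2) := by
          rw [hμ a b h g ((_ : H × H) × (H × H)) _ (fun i => i.2.1) (fun i => i.2.2)
            (fun i => i.1.2) hrepL, map_sum]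
          simp only [smashCoact_tmul_mul]
          rw [Finset.sum_sigma]
      _ = ∑ j ∈ crep k h, ∑ p ∈ crep k j.1, ∑ l ∈ crep k g, ∑ q ∈ crep k p.2,
            ((a * P.actR (P.actL p.1 b) (HopfAlgebra.antipode (R := k) j.2))
              ⊗ₜ[k] (q.1 * l.1)) ⊗ₜ[k] (q.2 * l.2) :=
          Finset.sum_congr rfl fun j _ => Finset.sum_congr rfl fun p _ =>
            Finset.sum_comm
      _ = ∑ j ∈ crep k h, ∑ l ∈ crep k g, ∑ p ∈ crep k j.1, ∑ q ∈ crep k p.2,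
            ((a * P.actR (P.actL p.1 b) (HopfAlgebra.antipode (R := k) j.2))
              ⊗ₜ[k] (q.1 * l.1)) ⊗ₜ[k] (q.2 * l.2) :=
          Finset.sum_congr rfl fun j _ => Finset.sum_comm
      _ = ∑ l ∈ crep k g, ∑ j ∈ crep k h, ∑ p ∈ crep k j.1, ∑ q ∈ crep k p.2,
            ((a * P.actR (P.actL p.1 b) (HopfAlgebra.antipode (R := k) j.2))
              ⊗ₜ[k] (q.1 * l.1)) ⊗ₜ[k] (q.2 * l.2) :=
          Finset.sum_comm
      _ = ∑ l ∈ crep k g, Xi4 P a b l.1 l.2 (comul4 k H h) :=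
          Finset.sum_congr rfl fun l _ => (eval4 l).symm
  have rhs : μT (smashCoact k H A (a ⊗ₜ[k] h)) (smashCoact k H A (b ⊗ₜ[k] g))
      = ∑ l ∈ crep k g, Xi3 P a b l.1 l.2 (comul4 k H h) := by
    calc μT (smashCoact k H A (a ⊗ₜ[k] h)) (smashCoact k H A (b ⊗ₜ[k] g))
        = ∑ l ∈ crep k g, ∑ j ∈ crep k h,
            μ (a ⊗ₜ[k] j.1) (b ⊗ₜ[k] l.1) ⊗ₜ[k] (j.2 * l.2) := by
          rw [smashCoact_tmul, smashCoact_tmul, map_sum]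
          simp only [LinearMap.coe_sum, Finset.sum_apply, map_sum, hμT]
      _ = ∑ l ∈ crep k g, Xi3 P a b l.1 l.2 (comul4 k H h) := by
          refine Finset.sum_congr rfl fun l _ => ?_
          rw [eval3 l]
          refine Finset.sum_congr rfl fun j _ => ?_
          have hrepj : comul3 k H j.1
              = ∑ i ∈ (crep k j.1).sigma (fun p => crep k p.2),
                  i.1.1 ⊗ₜ[k] (i.2.1 ⊗ₜ[k] i.2.2) := by
            rw [comul3_repR, Finset.sum_sigma]
          rw [hμ a b j.1 l.1 ((_ : H × H) × (H × H)) _ (fun i => i.1.1) (fun i => i.2.1)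
            (fun i => i.2.2) hrepj, sum_tmul, Finset.sum_sigma]
  rw [lhs, rhs]
  exact Finset.sum_congr rfl fun l _ => main l

end AuxSmash5
set_option synthInstance.maxHeartbeats 400000
set_option maxHeartbeats 800000

/-- `ρ := id_A ⊗ Δ` restricted to `A ⊛ H` takes values in `(A ⊛ H) ⊗ H`,
satisfies `ρ((a ⊗ h)(1 ⊗ 1)) = (a(h₁ ⇀ 1_A ↼ S(h₂)) ⊗ h₃) ⊗ h₄`, and makes `A ⊛ H` a
right `H`-comodule algebra: it is multiplicative, coassociative and counital. -/
theorem smash_right_comodule_algebra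
    (k H A : Type) [Field k] [Ring H] [HopfAlgebra k H] [Ring A] [Algebra k A]
    (P : PartialBimoduleAlgebra k H A) (hsym : SymCond k H A P)
    (μ : A ⊗[k] H →ₗ[k] A ⊗[k] H →ₗ[k] A ⊗[k] H)
    (hμ : IsPartialSmashMul k H A P μ)
    -- the algebra structure on `(A ⊗ H) ⊗ H`: `(u ⊗ h)(v ⊗ g) = uv ⊗ hg`
    (μT : (A ⊗[k] H) ⊗[k] H →ₗ[k] (A ⊗[k] H) ⊗[k] H →ₗ[k] (A ⊗[k] H) ⊗[k] H)
    (hμT : ∀ (x y : A ⊗[k] H) (h g : H),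
      μT (x ⊗ₜ[k] h) (y ⊗ₜ[k] g) = μ x y ⊗ₜ[k] (h * g)) :
    -- `ρ((a ⊗ h)(1 ⊗ 1)) = (a(h₁ ⇀ 1_A ↼ S(h₂)) ⊗ h₃) ⊗ h₄`
    (∀ (a : A) (h : H) (ι : Type) (s : Finset ι) (h₁ h₂ h₃ h₄ : ι → H),
      comul4 k H h = ∑ i ∈ s, h₁ i ⊗ₜ[k] (h₂ i ⊗ₜ[k] (h₃ i ⊗ₜ[k] h₄ i)) →
      smashCoact k H A (μ (a ⊗ₜ[k] h) ((1 : A) ⊗ₜ[k] (1 : H)))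
        = ∑ i ∈ s,
            ((a * P.actR (P.actL (h₁ i) 1) (HopfAlgebra.antipode (R := k) (h₂ i)))
                ⊗ₜ[k] h₃ i)
              ⊗ₜ[k] h₄ i) ∧
    -- `ρ` maps `A ⊛ H` into `(A ⊛ H) ⊗ H`
    (∀ x ∈ unitalPart k H A μ,
      smashCoact k H A x
        ∈ LinearMap.range (LinearMap.rTensor H (μ.flip ((1 : A) ⊗ₜ[k] (1 : H))))) ∧
    -- `ρ` is multiplicative on `A ⊛ H`
    (∀ x ∈ unitalPart k H A μ, ∀ y ∈ unitalPart k H A μ,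
      smashCoact k H A (μ x y) = μT (smashCoact k H A x) (smashCoact k H A y)) ∧
    -- coassociativity: `(ρ ⊗ id) ∘ ρ = (id ⊗ Δ) ∘ ρ`
    (∀ x ∈ unitalPart k H A μ,
      (TensorProduct.assoc k (A ⊗[k] H) H H)
          (LinearMap.rTensor H (smashCoact k H A) (smashCoact k H A x))
        = LinearMap.lTensor (A ⊗[k] H) (Coalgebra.comul (R := k))
            (smashCoact k H A x)) ∧
    -- counit: `(id ⊗ ε) ∘ ρ = id` on `A ⊛ H`
    (∀ x ∈ unitalPart k H A μ,
      (TensorProduct.rid k (A ⊗[k] H))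
          (LinearMap.lTensor (A ⊗[k] H) (Coalgebra.counit (R := k))
            (smashCoact k H A x))
        = x) := by
  have e43 : ∀ (a : A) (h : H),
      Xi4 P a 1 1 1 (comul4 k H h) = Xi3 P a 1 1 1 (comul4 k H h) := fun a h => by
    rw [comul4_eq_lTensor]
    exact swap34 P hsym a 1 1 1 _
  have e30 : ∀ (a : A) (h : H),
      Xi3 P a 1 1 1 (comul4 k H h) = Xi0 P a 1 1 1 (comul4 k H h) := fun a h => by
    rw [comul4_eq_Jmap]
    exact swap23 P hsym a 1 1 1 _
  have keyR : ∀ y : A ⊗[k] H,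
      smashCoact k H A (μ.flip ((1 : A) ⊗ₜ[k] (1 : H)) y)
        = LinearMap.rTensor H (μ.flip ((1 : A) ⊗ₜ[k] (1 : H))) (smashCoact k H A y) := by
    intro y
    induction y using TensorProduct.induction_on with
    | zero => simp only [map_zero]
    | add u v hu hv => simp only [map_add, hu, hv]
    | tmul a h =>
      rw [LinearMap.flip_apply, key1 P μ hμ a h, e43 a h, key2 P μ hμ a h]
  refine ⟨?_, ?_, ?_, ?_, ?_⟩
  · -- the explicit formula
    intro a h ι s h₁ h₂ h₃ h₄ hrep
    rw [key1 P μ hμ a h, e43 a h, e30 a h, hrep, map_sum]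
    simp only [Xi0_tmul, tauB_apply, mul_one]
  · -- range condition
    rintro x ⟨y, rfl⟩
    exact ⟨smashCoact k H A y, (keyR y).symm⟩
  · -- multiplicativity
    intro x hx y hy
    clear hx hy
    induction x using TensorProduct.induction_on with
    | zero => simp only [map_zero, LinearMap.zero_apply]
    | add u v hu hv => simp only [map_add, LinearMap.add_apply, hu, hv]
    | tmul a h =>
      induction y using TensorProduct.induction_on with
      | zero => simp only [map_zero]
      | add u v hu hv => simp only [map_add, hu, hv]
      | tmul b g => exact key3 P hsym μ hμ μT hμT a b h g
  · -- coassociativity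
    intro x hx
    clear hx
    induction x using TensorProduct.induction_on with
    | zero => simp only [map_zero]
    | add u v hu hv => simp only [map_add, hu, hv]
    | tmul a h => exact key4 a h
  · -- counit
    intro x hx
    clear hx
    induction x using TensorProduct.induction_on with
    | zero => simp only [map_zero]
    | add u v hu hv => simp only [map_add, hu, hv]
    | tmul a h => exact key5 a h
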